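/- Let H be an infinite open subgroup of a Hausdorff topological group G and let X be a nonempty set of cosets of H in G. Then the subgroup K generated by the union of the cosets in X satisfies w(K) = max(w(H), |X|). -/

import Mathlib

universe u

/-- The weight of a topological space: the minimal cardinality of a basis of the topology. -/
noncomputable def topWeight (X : Type u) [TopologicalSpace X] : Cardinal.{u} :=
  sInf { c : Cardinal.{u} |
    ∃ B : Set (Set X), TopologicalSpace.IsTopologicalBasis B ∧ Cardinal.mk B = c }

/-!
The cosets of the open subgroup `H` are pairwise disjoint open sets, all homeomorphic to `H`.
Hence a union `A` of cosets has `w(A) = max(w(H), #cosets)`, as `w(H)` is infinite (`H` is an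
infinite T₁ space). It remains to count the cosets that make up `K`. Pick a dense `D ⊆ H` with
`|D| ≤ w(H)` and one representative of each coset in `X`. These generate a subgroup `W` with
`|W| ≤ max(w(H), |X|)`. Its closure contains `H` and the representatives, hence every coset in
`X`, hence `K`. Since `H` is open, every point of the closure of `W` lies in a coset `wH` with
`w ∈ W`.
-/

open TopologicalSpace Topology Cardinal Set

theorem exists_isTopologicalBasis_mk_eq_topWeight (T : Type u) [TopologicalSpace T] :
    ∃ B : Set (Set T), IsTopologicalBasis B ∧ #B = topWeight T :=
  csInf_mem (s := {c | ∃ B : Set (Set T), IsTopologicalBasis B ∧ #B = c})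
    ⟨_, _, isTopologicalBasis_opens, rfl⟩

theorem TopologicalSpace.IsTopologicalBasis.topWeight_le_mk {T : Type u} [TopologicalSpace T]
    {B : Set (Set T)} (hB : IsTopologicalBasis B) : topWeight T ≤ #B :=
  csInf_le' ⟨B, hB, rfl⟩

theorem Topology.IsInducing.topWeight_le {S T : Type u} [TopologicalSpace S]
    [TopologicalSpace T] {f : S → T} (hf : IsInducing f) : topWeight S ≤ topWeight T := by
  obtain ⟨B, hB, hBw⟩ := exists_isTopologicalBasis_mk_eq_topWeight T
  calc topWeight S ≤ #(preimage f '' B) := (hB.isInducing hf).topWeight_le_mk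
    _ ≤ #B := mk_image_le
    _ = topWeight T := hBw

theorem aleph0_le_topWeight (T : Type u) [TopologicalSpace T] [T1Space T] [Infinite T] :
    ℵ₀ ≤ topWeight T := by
  obtain ⟨B, hB, hBw⟩ := exists_isTopologicalBasis_mk_eq_topWeight T
  rw [← hBw]
  by_contra! hfin
  have : Finite B := lt_aleph0_iff_finite.mp hfin
  have hinj : Function.Injective fun t : T => {b : B | t ∈ (b : Set T)} := by
    intro s t hst
    by_contra hne
    obtain ⟨b, hb, hsb, hbt⟩ := hB.exists_subset_of_mem_open hne isOpen_ne
    exact hbt ((Set.ext_iff.1 hst ⟨b, hb⟩).1 hsb) rfl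
  have := Finite.of_injective _ hinj
  exact not_finite T

theorem exists_dense_mk_le_topWeight (T : Type u) [TopologicalSpace T] :
    ∃ D : Set T, Dense D ∧ #D ≤ topWeight T := by
  obtain ⟨B, hB, hBw⟩ := exists_isTopologicalBasis_mk_eq_topWeight T
  refine ⟨range fun b : {b : B // (b : Set T).Nonempty} => b.2.some, ?_, ?_⟩
  · exact hB.dense_iff.2 fun o ho hne => ⟨hne.some, hne.some_mem, ⟨⟨o, ho⟩, hne⟩, rfl⟩
  · exact mk_range_le.trans ((mk_subtype_le _).trans hBw.le)

theorem mk_range_le_topWeight {T Y : Type u} [TopologicalSpace T] [TopologicalSpace Y]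
    [DiscreteTopology Y] {f : T → Y} (hf : Continuous f) : #(range f) ≤ topWeight T := by
  obtain ⟨B, hB, hBw⟩ := exists_isTopologicalBasis_mk_eq_topWeight T
  have hfiber : ∀ y : range f, ∃ b ∈ B, b.Nonempty ∧ b ⊆ f ⁻¹' {y.1} := by
    rintro ⟨_, x, rfl⟩
    obtain ⟨b, hb, hxb, hbf⟩ := hB.exists_subset_of_mem_open (mem_singleton (f x))
      ((isOpen_discrete {f x}).preimage hf)
    exact ⟨b, hb, ⟨x, hxb⟩, hbf⟩
  choose b hbB hbne hbf using hfiber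
  refine hBw ▸ mk_le_of_injective (f := fun y => (⟨b y, hbB y⟩ : B)) fun y₁ y₂ h => ?_
  obtain ⟨x, hx⟩ := hbne y₁
  have hb : b y₁ = b y₂ := congrArg Subtype.val h
  have hx₂ : x ∈ b y₂ := hb ▸ hx
  exact Subtype.ext ((hbf y₁ hx).symm.trans (hbf y₂ hx₂))

theorem topWeight_le_mk_mul_of_isOpen_cover {T ι : Type u} [TopologicalSpace T]
    {U : ι → Set T} (hUo : ∀ i, IsOpen (U i)) (hU : ⋃ i, U i = Set.univ) {κ : Cardinal.{u}}
    (hκ : ∀ i, topWeight (U i) ≤ κ) : topWeight T ≤ #ι * κ := by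
  choose B hB hBw using fun i => exists_isTopologicalBasis_mk_eq_topWeight (U i)
  calc topWeight T ≤ #(⋃ i, image ((↑) : U i → T) '' B i) :=
        (isTopologicalBasis_of_cover hUo hU hB).topWeight_le_mk
    _ ≤ #ι * ⨆ i, #(image ((↑) : U i → T) '' B i) := mk_iUnion_le _
    _ ≤ #ι * κ := by
        gcongr
        exact ciSup_le' fun i => mk_image_le.trans ((hBw i).trans_le (hκ i))

theorem Subgroup.cardinalMk_closure_le_max {G : Type u} [Group G] (s : Set G) :
    #(closure s) ≤ max #s ℵ₀ := by
  rcases s.eq_empty_or_nonempty with rfl | hs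
  · simp
  · have := hs.to_subtype
    rw [FreeGroup.closure_eq_range, ← mk_freeGroup]
    exact mk_le_of_surjective (MonoidHom.rangeRestrict_surjective _)

theorem Subgroup.le_closure_preimage_mk {G : Type u} [Group G] {H : Subgroup G}
    {X : Set (G ⧸ H)} (hX : X.Nonempty) :
    H ≤ closure ((QuotientGroup.mk : G → G ⧸ H) ⁻¹' X) := by
  obtain ⟨x, hx⟩ := hX
  intro h hh
  have hg : x.out ∈ (QuotientGroup.mk : G → G ⧸ H) ⁻¹' X := by simpa using hx
  have hgh : x.out * h ∈ (QuotientGroup.mk : G → G ⧸ H) ⁻¹' X := by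
    simpa [QuotientGroup.mk_mul_of_mem _ hh] using hx
  simpa using mul_mem (inv_mem (subset_closure hg)) (subset_closure hgh)

section OpenSubgroup

variable {G : Type u} [Group G] [TopologicalSpace G] {H : Subgroup G}

local notation "π" => (QuotientGroup.mk : G → G ⧸ H)

theorem image_mk_closure_subset [SeparatelyContinuousMul G] (hH : IsOpen (H : Set G))
    (A : Set G) : π '' closure A ⊆ π '' A := by
  have := QuotientGroup.discreteTopology hH
  simpa using image_closure_subset_closure_image (f := π) QuotientGroup.continuous_mk (s := A)

theorem mk_image_mk_le_topWeight [SeparatelyContinuousMul G] (hH : IsOpen (H : Set G))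
    (A : Set G) : #(π '' A) ≤ topWeight A := by
  have := QuotientGroup.discreteTopology hH
  have hcont : Continuous (π ∘ ((↑) : A → G)) :=
    QuotientGroup.continuous_mk.comp continuous_subtype_val
  simpa [range_comp] using mk_range_le_topWeight hcont

theorem topWeight_le_mk_image_mk_mul [SeparatelyContinuousMul G] (hH : IsOpen (H : Set G))
    (A : Set G) : topWeight A ≤ #(π '' A) * topWeight H := by
  have := QuotientGroup.discreteTopology hH
  refine topWeight_le_mk_mul_of_isOpen_cover (U := fun q : π '' A => {a : A | π a = q})
    (fun q => (isOpen_discrete {q.1}).preimage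
      (QuotientGroup.continuous_mk.comp continuous_subtype_val))
    (eq_univ_of_forall fun a => mem_iUnion.2 ⟨⟨π a, a, a.2, rfl⟩, rfl⟩) fun q => ?_
  let f : {a : A | π a = q} → H := fun a =>
    ⟨q.1.out⁻¹ * a.1.1, QuotientGroup.eq.1 (by rw [QuotientGroup.out_eq']; exact a.2.symm)⟩
  have hf : IsInducing f := by
    rw [← IsInducing.subtypeVal.of_comp_iff]
    exact (Homeomorph.mulLeft q.1.out⁻¹).isInducing.comp
      (IsInducing.subtypeVal.comp IsInducing.subtypeVal)
  exact hf.topWeight_le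

theorem mk_image_mk_closure_preimage_le [IsTopologicalGroup G] (hH : IsOpen (H : Set G))
    (X : Set (G ⧸ H)) :
    #(π '' Subgroup.closure (π ⁻¹' X)) ≤ max (#X + topWeight H) ℵ₀ := by
  obtain ⟨D, hD, hDw⟩ := exists_dense_mk_le_topWeight H
  set W := Subgroup.closure (Quotient.out '' X ∪ Subtype.val '' D)
  have hHW : (H : Set G) ⊆ closure W := by
    have hH_sub := continuous_subtype_val.range_subset_closure_image_dense hD
    rw [Subtype.range_coe] at hH_sub
    exact hH_sub.trans (closure_mono (subset_union_right.trans Subgroup.subset_closure))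
  have hKW : Subgroup.closure (π ⁻¹' X) ≤ W.topologicalClosure := by
    rw [Subgroup.closure_le]
    intro g hg
    obtain ⟨h, hh⟩ := QuotientGroup.mk_out_eq_mul H g
    have hout : (π g).out ∈ W := Subgroup.subset_closure (Or.inl ⟨π g, hg, rfl⟩)
    rw [show g = (π g).out * (h : G)⁻¹ by simp [hh]]
    exact mul_mem (W.le_topologicalClosure hout) (hHW (inv_mem h.2))
  calc #(π '' Subgroup.closure (π ⁻¹' X)) ≤ #(π '' closure W) :=
        mk_le_mk_of_subset (image_mono hKW)
    _ ≤ #(π '' W) := mk_le_mk_of_subset (image_mk_closure_subset hH _)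
    _ ≤ #W := mk_image_le
    _ ≤ max #(Quotient.out '' X ∪ Subtype.val '' D : Set G) ℵ₀ :=
        Subgroup.cardinalMk_closure_le_max _
    _ ≤ max (#X + topWeight H) ℵ₀ := max_le_max_right _ <|
        (mk_union_le _ _).trans (add_le_add mk_image_le (mk_image_le.trans hDw))

end OpenSubgroup

/-- Let `H` be an infinite open subgroup of a Hausdorff topological group `G` and `X` a
nonempty set of (left) cosets of `H` in `G`. Then the subgroup `K` generated by the union
of the cosets in `X` (the preimage of `X` under the quotient map `G → G ⧸ H`) satisfies
$w(K) = \max\{w(H), |X|\}$. -/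
theorem weight_subgroup_generated_by_cosets (G : Type u) [Group G] [TopologicalSpace G]
    [IsTopologicalGroup G] [T2Space G]
    (H : Subgroup G) (hopen : IsOpen (H : Set G)) (hinf : Infinite H)
    (X : Set (G ⧸ H)) (hX : X.Nonempty) :
    topWeight (Subgroup.closure ((QuotientGroup.mk : G → G ⧸ H) ⁻¹' X)) =
      max (topWeight H) (Cardinal.mk X) := by
  set K := Subgroup.closure ((QuotientGroup.mk : G → G ⧸ H) ⁻¹' X)
  have hwH : ℵ₀ ≤ topWeight H := aleph0_le_topWeight H
  have hXK : #X ≤ #((QuotientGroup.mk : G → G ⧸ H) '' K) :=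
    mk_le_mk_of_subset fun x hx => ⟨x.out, Subgroup.subset_closure (by simpa using hx), by simp⟩
  have hKX : #((QuotientGroup.mk : G → G ⧸ H) '' K) ≤ max (topWeight H) #X := by
    refine (mk_image_mk_closure_preimage_le hopen X).trans_eq ?_
    rw [add_eq_max' hwH, max_comm #X, max_eq_left (hwH.trans (le_max_left _ _))]
  have hHK : topWeight H ≤ topWeight K :=
    (IsEmbedding.inclusion (Subgroup.le_closure_preimage_mk hX)).isInducing.topWeight_le
  refine le_antisymm ?_ (max_le hHK (hXK.trans (mk_image_mk_le_topWeight hopen K)))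
  calc topWeight K ≤ #((QuotientGroup.mk : G → G ⧸ H) '' K) * topWeight H :=
        topWeight_le_mk_image_mk_mul hopen K
    _ ≤ max (topWeight H) #X * topWeight H := by gcongr
    _ ≤ max (max (topWeight H) #X) (topWeight H) := mul_le_max_of_aleph0_le_right hwH
    _ = max (topWeight H) #X := by simp
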